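/- For any perfect relevant algebra A, the map θ: A → (A_•)⁺ defined by θ(a) = {j ∈ J∞(A) : j ≤ a} is an isomorphism of relevant algebras from A onto the complex algebra of its prime structure: θ is a bijection from A onto the set of ≼-up-sets of A_•, and θ(a ∧ b) = θ(a) ∩ θ(b), θ(a ∨ b) = θ(a) ∪ θ(b), θ(a ∘ b) = θ(a) ∘꜀ θ(b), θ(a → b) = θ(a) →꜀ θ(b), θ(∼a) = ∼꜀θ(a), θ(t) = O_t, θ(⊤) = J∞(A), and θ(⊥) = ∅. -/
import Mathlib


/-- Completely join-irreducible element of a complete lattice: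
whenever `a = ⋁ S`, then `a = s` for some `s ∈ S`. -/
def CompletelyJoinIrreducible {A : Type*} [CompleteLattice A] (a : A) : Prop :=
  ∀ S : Set A, a = sSup S → ∃ s ∈ S, a = s

/-- Completely meet-irreducible element of a complete lattice:
whenever `a = ⋀ S`, then `a = s` for some `s ∈ S`. -/
def CompletelyMeetIrreducible {A : Type*} [CompleteLattice A] (a : A) : Prop :=
  ∀ S : Set A, a = sInf S → ∃ s ∈ S, a = s

/-- A perfect relevant algebra: a complete, completely distributive lattice
which is join-generated by its completely join-irreducible elements and
meet-generated by its completely meet-irreducible elements, equipped with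
fusion `fus`, relevant implication `rimp`, relevant negation `rneg` and the
relevant truth constant `rt`, satisfying the relevant algebra axioms together
with the complete (anti)additivity laws. -/
class PerfectRelevantAlgebra (A : Type*) extends CompletelyDistribLattice A where
  fus : A → A → A
  rimp : A → A → A
  rneg : A → A
  rt : A
  fus_sup_left : ∀ a b c : A, fus a (b ⊔ c) = fus a b ⊔ fus a c
  fus_sup_right : ∀ a b c : A, fus (b ⊔ c) a = fus b a ⊔ fus c a
  rneg_sup : ∀ a b : A, rneg (a ⊔ b) = rneg a ⊓ rneg b
  rneg_inf : ∀ a b : A, rneg (a ⊓ b) = rneg a ⊔ rneg b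
  rneg_top : rneg ⊤ = ⊥
  rneg_bot : rneg ⊥ = ⊤
  fus_bot : ∀ a : A, fus a ⊥ = ⊥
  bot_fus : ∀ a : A, fus ⊥ a = ⊥
  rt_fus : ∀ a : A, fus rt a = a
  fus_le_iff : ∀ a b c : A, fus a b ≤ c ↔ a ≤ rimp b c
  fus_sSup_left : ∀ (S : Set A) (a : A), fus (sSup S) a = ⨆ s ∈ S, fus s a
  fus_sSup_right : ∀ (S : Set A) (a : A), fus a (sSup S) = ⨆ s ∈ S, fus a s
  rimp_sSup_left : ∀ (S : Set A) (a : A), rimp (sSup S) a = ⨅ s ∈ S, rimp s a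
  rimp_sInf_right : ∀ (S : Set A) (a : A), rimp a (sInf S) = ⨅ s ∈ S, rimp a s
  rneg_sSup : ∀ S : Set A, rneg (sSup S) = ⨅ s ∈ S, rneg s
  rneg_sInf : ∀ S : Set A, rneg (sInf S) = ⨆ s ∈ S, rneg s
  join_generated : ∀ a : A, a = sSup {j : A | CompletelyJoinIrreducible j ∧ j ≤ a}
  meet_generated : ∀ a : A, a = sInf {m : A | CompletelyMeetIrreducible m ∧ a ≤ m}

namespace PerfectRelevantAlgebra

variable {A : Type*} [PerfectRelevantAlgebra A]

/-- The right adjoint `∼♯` of relevant negation: `∼♯ a = ⋁{b : a ≤ ∼b}`. -/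
def rnegSharp (a : A) : A := sSup {b : A | a ≤ rneg b}

/-- The left adjoint `∼♭` of relevant negation: `∼♭ b = ⋀{a : ∼a ≤ b}`. -/
def rnegFlat (b : A) : A := sInf {a : A | rneg a ≤ b}

/-- `λ(m) = ⋀{u : u ≰ m}`. -/
def lam (m : A) : A := sInf {u : A | ¬ u ≤ m}

end PerfectRelevantAlgebra

namespace PerfectRelevantAlgebra

variable {A : Type*} [PerfectRelevantAlgebra A]

/-- The ternary relation `R∘` of the prime structure: `R∘ a b c ↔ c ≤ a ∘ b`. -/
def primeR (a b c : A) : Prop := c ≤ fus a b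

/-- The preorder of the prime structure. -/
def primePre (b c : A) : Prop :=
  ∃ j : A, CompletelyJoinIrreducible j ∧ j ≤ rt ∧ primeR j b c

/-- The star of the prime structure: `a^{∗∼} = λ(∼♯ a)`. -/
def primeStar (a : A) : A := lam (rnegSharp a)

/-- The map `θ(a) = {j ∈ J∞(A) : j ≤ a}`. -/
def theta (a : A) : Set A := {j : A | CompletelyJoinIrreducible j ∧ j ≤ a}

/-- A subset of `J∞(A)` that is upward closed with respect to `≼`. -/
def IsPrimeUpset (Y : Set A) : Prop :=
  Y ⊆ {a : A | CompletelyJoinIrreducible a} ∧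
  ∀ u v : A, u ∈ Y → CompletelyJoinIrreducible v → primePre u v → v ∈ Y

/-- Complex implication on subsets of `J∞(A)`. -/
def primeCimp (Y Z : Set A) : Set A :=
  {x : A | CompletelyJoinIrreducible x ∧
    ∀ y z : A, CompletelyJoinIrreducible y → CompletelyJoinIrreducible z →
      primeR x y z → y ∈ Y → z ∈ Z}

/-- Complex fusion on subsets of `J∞(A)`. -/
def primeCfus (Y Z : Set A) : Set A :=
  {x : A | CompletelyJoinIrreducible x ∧ ∃ y ∈ Y, ∃ z ∈ Z, primeR y z x}

/-- Complex relevant negation on subsets of `J∞(A)`. -/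
def primeCneg (Y : Set A) : Set A :=
  {x : A | CompletelyJoinIrreducible x ∧ primeStar x ∉ Y}

end PerfectRelevantAlgebra

namespace PerfectRelevantAlgebra

variable {A : Type*} [PerfectRelevantAlgebra A]

lemma not_cji_bot : ¬ CompletelyJoinIrreducible (⊥ : A) := by
  intro h
  obtain ⟨s, hs, _⟩ := h ∅ (by simp)
  exact hs

lemma sSup_theta (a : A) : sSup (theta a) = a := (join_generated a).symm

lemma cji_le_sSup {j : A} (hj : CompletelyJoinIrreducible j) {S : Set A}
    (h : j ≤ sSup S) : ∃ s ∈ S, j ≤ s := by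
  have h1 : j = sSup ((fun s => j ⊓ s) '' S) := by
    rw [sSup_image]
    have h2 : j ⊓ sSup S = ⨆ b ∈ S, j ⊓ b := inf_sSup_eq
    rw [inf_eq_left.mpr h] at h2
    exact h2
  obtain ⟨s, ⟨u, hu, rfl⟩, hjs⟩ := hj _ h1
  exact ⟨u, hu, hjs.le.trans inf_le_right⟩

lemma cji_le_biSup {j : A} (hj : CompletelyJoinIrreducible j) {S : Set A}
    {f : A → A} (h : j ≤ ⨆ s ∈ S, f s) : ∃ s ∈ S, j ≤ f s := by
  rw [← sSup_image] at h
  obtain ⟨t, ⟨s, hs, rfl⟩, hts⟩ := cji_le_sSup hj h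
  exact ⟨s, hs, hts⟩

lemma fus_mono_left {a b : A} (h : a ≤ b) (c : A) : fus a c ≤ fus b c := by
  have h1 : fus b c = fus a c ⊔ fus b c := by
    rw [← fus_sup_right, sup_eq_right.mpr h]
  rw [h1]; exact le_sup_left

lemma fus_mono_right {a b : A} (h : a ≤ b) (c : A) : fus c a ≤ fus c b := by
  have h1 : fus c b = fus c a ⊔ fus c b := by
    rw [← fus_sup_left, sup_eq_right.mpr h]
  rw [h1]; exact le_sup_left

lemma fus_mono {a b c d : A} (h1 : a ≤ b) (h2 : c ≤ d) : fus a c ≤ fus b d :=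
  (fus_mono_left h1 c).trans (fus_mono_right h2 b)

lemma rneg_antitone {a b : A} (h : a ≤ b) : rneg b ≤ rneg a := by
  have h1 : rneg b = rneg a ⊓ rneg b := by
    rw [← rneg_sup, sup_eq_right.mpr h]
  rw [h1]; exact inf_le_left

lemma rneg_galois (x b : A) : x ≤ rneg b ↔ b ≤ rnegSharp x := by
  constructor
  · intro h; exact le_sSup h
  · intro h
    have h1 : x ≤ rneg (rnegSharp x) := by
      rw [rnegSharp, rneg_sSup]
      exact le_iInf₂ fun s hs => hs
    exact h1.trans (rneg_antitone h)

lemma cmi_rnegSharp {x : A} (hx : CompletelyJoinIrreducible x) :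
    CompletelyMeetIrreducible (rnegSharp x) := by
  intro T hT
  have h1 : x ≤ rneg (rnegSharp x) := (rneg_galois x _).mpr le_rfl
  rw [hT, rneg_sInf] at h1
  obtain ⟨t, ht, hxt⟩ := cji_le_biSup hx h1
  refine ⟨t, ht, le_antisymm (hT ▸ sInf_le ht) ((rneg_galois x t).mp hxt)⟩

lemma lam_not_le {m : A} (hm : CompletelyMeetIrreducible m) : ¬ lam m ≤ m := by
  intro h
  have h1 : m = sInf ((fun u => m ⊔ u) '' {u : A | ¬ u ≤ m}) := by
    rw [sInf_image]
    have h2 : m ⊔ sInf {u : A | ¬ u ≤ m} = ⨅ b ∈ {u : A | ¬ u ≤ m}, m ⊔ b :=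
      sup_sInf_eq
    rw [show m ⊔ sInf {u : A | ¬ u ≤ m} = m from sup_eq_left.mpr h] at h2
    exact h2
  obtain ⟨s, ⟨u, hu, rfl⟩, hms⟩ := hm _ h1
  exact hu (sup_eq_left.mp hms.symm)

lemma lam_le_iff {m : A} (hm : CompletelyMeetIrreducible m) (a : A) :
    lam m ≤ a ↔ ¬ a ≤ m := by
  constructor
  · intro h ha; exact lam_not_le hm (h.trans ha)
  · intro h; exact sInf_le h

lemma cji_lam {m : A} (hm : CompletelyMeetIrreducible m) :
    CompletelyJoinIrreducible (lam m) := by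
  intro S hS
  have h1 : ¬ sSup S ≤ m := by rw [← hS]; exact lam_not_le hm
  have h2 : ∃ s ∈ S, ¬ s ≤ m := by
    by_contra h; push_neg at h
    exact h1 (sSup_le h)
  obtain ⟨s, hs, hsm⟩ := h2
  exact ⟨s, hs, le_antisymm (sInf_le hsm) (hS ▸ le_sSup hs)⟩

lemma cji_star {x : A} (hx : CompletelyJoinIrreducible x) :
    CompletelyJoinIrreducible (primeStar x) :=
  cji_lam (cmi_rnegSharp hx)

lemma star_le_iff {x : A} (hx : CompletelyJoinIrreducible x) (a : A) :
    primeStar x ≤ a ↔ ¬ x ≤ rneg a := by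
  rw [primeStar, lam_le_iff (cmi_rnegSharp hx), rneg_galois]

end PerfectRelevantAlgebra

open PerfectRelevantAlgebra in
/-- `θ` is an isomorphism of relevant algebras from a perfect
relevant algebra onto the complex algebra of its prime structure. -/
theorem theta_isomorphism {A : Type*} [PerfectRelevantAlgebra A] :
    (∀ a : A, IsPrimeUpset (theta a)) ∧
    (∀ a b : A, theta a = theta b → a = b) ∧
    (∀ Y : Set A, IsPrimeUpset Y → ∃ a : A, theta a = Y) ∧
    (∀ a b : A, theta (a ⊓ b) = theta a ∩ theta b) ∧
    (∀ a b : A, theta (a ⊔ b) = theta a ∪ theta b) ∧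
    (∀ a b : A, theta (fus a b) = primeCfus (theta a) (theta b)) ∧
    (∀ a b : A, theta (rimp a b) = primeCimp (theta a) (theta b)) ∧
    (∀ a : A, theta (rneg a) = primeCneg (theta a)) ∧
    theta (rt : A) = {j : A | CompletelyJoinIrreducible j ∧ j ≤ rt} ∧
    theta (⊤ : A) = {a : A | CompletelyJoinIrreducible a} ∧
    theta (⊥ : A) = (∅ : Set A) := by
  refine ⟨?_, ?_, ?_, ?_, ?_, ?_, ?_, ?_, rfl, ?_, ?_⟩
  · -- upsets
    intro a
    refine ⟨fun j hj => hj.1, ?_⟩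
    rintro u v hu hv ⟨j, hjCJI, hjt, hR⟩
    refine ⟨hv, hR.trans ?_⟩
    calc fus j u ≤ fus rt a := fus_mono hjt hu.2
      _ = a := rt_fus a
  · -- injective
    intro a b h
    rw [← sSup_theta a, ← sSup_theta b, h]
  · -- surjective
    intro Y hY
    refine ⟨sSup Y, Set.ext fun j => ⟨?_, fun hj => ⟨hY.1 hj, le_sSup hj⟩⟩⟩
    rintro ⟨hjCJI, hle⟩
    obtain ⟨y, hy, hjy⟩ := cji_le_sSup hjCJI hle
    have h1 : j ≤ ⨆ k ∈ theta (rt : A), fus k y := by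
      calc j ≤ y := hjy
        _ = fus rt y := (rt_fus y).symm
        _ = fus (sSup (theta (rt : A))) y := by rw [sSup_theta]
        _ = ⨆ k ∈ theta (rt : A), fus k y := fus_sSup_left _ _
    obtain ⟨k, hk, hjk⟩ := cji_le_biSup hjCJI h1
    exact hY.2 y j hy hjCJI ⟨k, hk.1, hk.2, hjk⟩
  · -- meet
    intro a b
    ext x
    simp only [theta, Set.mem_setOf_eq, Set.mem_inter_iff, le_inf_iff]
    tauto
  · -- join
    intro a b
    ext x
    constructor
    · rintro ⟨hx, hle⟩
      have h1 : x ≤ sSup {a, b} := by rwa [sSup_pair]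
      obtain ⟨s, hs, hxs⟩ := cji_le_sSup hx h1
      rcases hs with rfl | rfl
      · exact Or.inl ⟨hx, hxs⟩
      · exact Or.inr ⟨hx, hxs⟩
    · rintro (⟨hx, hle⟩ | ⟨hx, hle⟩)
      · exact ⟨hx, hle.trans le_sup_left⟩
      · exact ⟨hx, hle.trans le_sup_right⟩
  · -- fusion
    intro a b
    ext x
    constructor
    · rintro ⟨hx, hle⟩
      have h1 : x ≤ ⨆ y ∈ theta a, fus y b := by
        calc x ≤ fus a b := hle
          _ = fus (sSup (theta a)) b := by rw [sSup_theta]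
          _ = ⨆ y ∈ theta a, fus y b := fus_sSup_left _ _
      obtain ⟨y, hy, hxy⟩ := cji_le_biSup hx h1
      have h2 : x ≤ ⨆ z ∈ theta b, fus y z := by
        calc x ≤ fus y b := hxy
          _ = fus y (sSup (theta b)) := by rw [sSup_theta]
          _ = ⨆ z ∈ theta b, fus y z := fus_sSup_right _ _
      obtain ⟨z, hz, hxz⟩ := cji_le_biSup hx h2
      exact ⟨hx, y, hy, z, hz, hxz⟩
    · rintro ⟨hx, y, hy, z, hz, hR⟩
      exact ⟨hx, hR.trans (fus_mono hy.2 hz.2)⟩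
  · -- implication
    intro a b
    ext x
    constructor
    · rintro ⟨hx, hle⟩
      refine ⟨hx, fun y z hy hz hR hmem => ⟨hz, ?_⟩⟩
      have h1 : fus x a ≤ b := (fus_le_iff x a b).mpr hle
      calc z ≤ fus x y := hR
        _ ≤ fus x a := fus_mono_right hmem.2 x
        _ ≤ b := h1
    · rintro ⟨hx, hprop⟩
      refine ⟨hx, (fus_le_iff x a b).mp ?_⟩
      have h1 : fus x a = ⨆ y ∈ theta a, fus x y := by
        rw [← fus_sSup_right, sSup_theta]
      rw [h1]
      refine iSup₂_le fun y hy => ?_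
      rw [← sSup_theta (fus x y)]
      refine sSup_le fun z hz => ?_
      exact (hprop y z hy.1 hz.1 hz.2 hy).2
  · -- negation
    intro a
    ext x
    constructor
    · rintro ⟨hx, hle⟩
      exact ⟨hx, fun hmem => (star_le_iff hx a).mp hmem.2 hle⟩
    · rintro ⟨hx, hnmem⟩
      refine ⟨hx, ?_⟩
      by_contra h
      exact hnmem ⟨cji_star hx, (star_le_iff hx a).mpr h⟩
  · -- top
    ext x
    simp [theta]
  · -- bot
    ext x
    simp only [theta, Set.mem_setOf_eq, le_bot_iff, Set.mem_empty_iff_false,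
      iff_false]
    rintro ⟨h, rfl⟩
    exact not_cji_bot h
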